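/- arXiv:1610.07380 — 2 statements merged into one kernel-verified Lean document; each statement's English description precedes it below -/
import Mathlib

section
/- For words x ∈ Σ* and y ∈ Σ⁺ with |x| = m and |y| = n, there exists a DFA with at most m + 2n + 2 states over Σ ∪ {$} recognizing the language x y* $ y⁺ = { x y^i $ y^j : i ≥ 0, j ≥ 1 }. -/
/-- Prepend a finite word to an infinite word. -/
def prependW {α : Type} (u : List α) (w : ℕ → α) : ℕ → α :=
  fun i => if h : i < u.length then u.get ⟨i, h⟩ else w (i - u.length)

/-- The periodic infinite word `v^ω` (arbitrary when `v = []`). -/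
def periodW {α : Type} [Inhabited α] (v : List α) : ℕ → α :=
  fun i => v.getD (i % v.length) default

/-- The ultimately periodic word `u · v^ω`. -/
def upw {α : Type} [Inhabited α] (u v : List α) : ℕ → α :=
  prependW u (periodW v)

/-- The ultimately periodic words of an ω-language. -/
def UP {α : Type} [Inhabited α] (L : Set (ℕ → α)) : Set (ℕ → α) :=
  { w | ∃ u v : List α, v ≠ [] ∧ w = upw u v ∧ w ∈ L }

/-- `v^k` : `k`-fold repetition of the finite word `v`. -/
def rep {α : Type} (v : List α) (k : ℕ) : List α :=
  (List.replicate k v).flatten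


/-
Every left quotient of `x y* $ y⁺` is one of: `u y* $ y⁺` for a suffix `u` of `x` or a
proper suffix `u` of `y` (both lists contain `u = []`), `u y*` for one of the `n + 1`
suffixes `u` of `y`, or `∅`. Indeed, reading a letter strips the head of `u` or gives `∅`,
and at `u = []` one unfolds `y* = ε + y y*`. These are at most `m + 2n + 2` languages, so
the Myhill–Nerode automaton of the language, whose states are its left quotients, is small
enough.
-/

namespace Language

variable {β : Type}

theorem leftQuotient_mem_of_forall_singleton_mem {S : Set (Language β)}
    (hS : ∀ K ∈ S, ∀ a, K.leftQuotient [a] ∈ S) {K : Language β} (hK : K ∈ S)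
    (w : List β) : K.leftQuotient w ∈ S := by
  induction w generalizing K with
  | nil => exact hK
  | cons a w ih => exact ih (hS K hK a)

theorem exists_dfa_card_le_of_leftQuotient_mem {ι : Type} [Fintype ι] (f : ι → Language β)
    {L : Language β} (hL : L ∈ Set.range f)
    (hf : ∀ i a, (f i).leftQuotient [a] ∈ Set.range f) :
    ∃ (σ : Type) (_ : Fintype σ) (D : DFA β σ), Fintype.card σ ≤ Fintype.card ι ∧
      D.accepts = L := by
  have hsub : Set.range L.leftQuotient ⊆ Set.range f := by
    rintro _ ⟨w, rfl⟩
    refine leftQuotient_mem_of_forall_singleton_mem ?_ hL w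
    rintro _ ⟨i, rfl⟩ a
    exact hf i a
  have hfin := (Set.finite_range f).subset hsub
  refine ⟨_, hfin.fintype, L.toDFA, ?_, L.accepts_toDFA⟩
  rw [Fintype.card_eq_nat_card, Fintype.card_eq_nat_card]
  exact (Nat.card_mono (Set.finite_range f) hsub).trans (Finite.card_range_le f)

end Language

theorem rep_succ {α : Type} (y : List α) (i : ℕ) : rep y (i + 1) = y ++ rep y i := by
  simp [rep, List.replicate_succ]

namespace DollarLanguage

variable {α : Type} (y : List α)

/-- `u y* $ y⁺`, with `$` encoded as `none`. -/
def preDollar (u : List α) : Language (Option α) :=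
  {w | ∃ i j, 1 ≤ j ∧ w = (u ++ rep y i).map some ++ none :: (rep y j).map some}

/-- `u y*`. -/
def postDollar (u : List α) : Language (Option α) :=
  {w | ∃ j, w = (u ++ rep y j).map some}

theorem mem_preDollar {u : List α} {w : List (Option α)} :
    w ∈ preDollar y u ↔
      ∃ i j, 1 ≤ j ∧ w = (u ++ rep y i).map some ++ none :: (rep y j).map some :=
  Iff.rfl

theorem mem_postDollar {u : List α} {w : List (Option α)} :
    w ∈ postDollar y u ↔ ∃ j, w = (u ++ rep y j).map some :=
  Iff.rfl

theorem leftQuotient_preDollar_cons_self (b : α) (u : List α) :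
    (preDollar y (b :: u)).leftQuotient [some b] = preDollar y u := by
  ext w
  simp [mem_preDollar]

theorem leftQuotient_preDollar_cons_of_ne {a : Option α} {b : α} (h : a ≠ some b)
    (u : List α) :
    (preDollar y (b :: u)).leftQuotient [a] = 0 := by
  ext w
  simp [mem_preDollar, h, Language.notMem_zero]

theorem leftQuotient_postDollar_cons_self (b : α) (u : List α) :
    (postDollar y (b :: u)).leftQuotient [some b] = postDollar y u := by
  ext w
  simp [mem_postDollar]

theorem leftQuotient_postDollar_cons_of_ne {a : Option α} {b : α} (h : a ≠ some b)
    (u : List α) :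
    (postDollar y (b :: u)).leftQuotient [a] = 0 := by
  ext w
  simp [mem_postDollar, h, Language.notMem_zero]

theorem mem_preDollar_nil {w : List (Option α)} :
    w ∈ preDollar y [] ↔ (∃ v ∈ postDollar y y, w = none :: v) ∨ w ∈ preDollar y y := by
  simp only [mem_preDollar, mem_postDollar, List.nil_append]
  constructor
  · rintro ⟨_ | i, j, hj, rfl⟩
    · obtain ⟨j, rfl⟩ := Nat.exists_eq_add_of_le' hj
      exact .inl ⟨_, ⟨j, rfl⟩, by rw [rep_succ]; rfl⟩
    · exact .inr ⟨i, j, hj, by rw [rep_succ]⟩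
  · rintro (⟨_, ⟨j, rfl⟩, rfl⟩ | ⟨i, j, hj, rfl⟩)
    · exact ⟨0, j + 1, by omega, by rw [rep_succ]; rfl⟩
    · exact ⟨i + 1, j, hj, by rw [rep_succ]⟩

theorem mem_postDollar_nil {w : List (Option α)} :
    w ∈ postDollar y [] ↔ w = [] ∨ w ∈ postDollar y y := by
  simp only [mem_postDollar, List.nil_append]
  constructor
  · rintro ⟨_ | j, rfl⟩
    · exact .inl rfl
    · exact .inr ⟨j, by rw [rep_succ]⟩
  · rintro (rfl | ⟨j, rfl⟩)
    · exact ⟨0, rfl⟩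
    · exact ⟨j + 1, by rw [rep_succ]⟩

theorem leftQuotient_preDollar_nil_none (hy : y ≠ []) :
    (preDollar y []).leftQuotient [none] = postDollar y y := by
  obtain ⟨b, y', rfl⟩ := List.exists_cons_of_ne_nil hy
  ext w
  have hnone : w ∉ (preDollar (b :: y') (b :: y')).leftQuotient [none] := by
    rw [leftQuotient_preDollar_cons_of_ne _ (by simp)]
    exact Language.notMem_zero w
  rw [Language.mem_leftQuotient, List.singleton_append] at hnone ⊢
  simp [mem_preDollar_nil, hnone]

theorem leftQuotient_preDollar_nil_some (b : α) :
    (preDollar y []).leftQuotient [some b] = (preDollar y y).leftQuotient [some b] := by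
  ext w
  simp [mem_preDollar_nil]

theorem leftQuotient_postDollar_nil (a : Option α) :
    (postDollar y []).leftQuotient [a] = (postDollar y y).leftQuotient [a] := by
  ext w
  simp [mem_postDollar_nil]

theorem leftQuotient_preDollar_drop_mem {S : Set (Language (Option α))} {u : List α} {p : ℕ}
    (hp : p < u.length) (hnext : preDollar y (u.drop (p + 1)) ∈ S) (hzero : 0 ∈ S)
    (a : Option α) : (preDollar y (u.drop p)).leftQuotient [a] ∈ S := by
  rw [List.drop_eq_getElem_cons hp]
  by_cases ha : a = some u[p]
  · rwa [ha, leftQuotient_preDollar_cons_self]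
  · rwa [leftQuotient_preDollar_cons_of_ne _ ha]

theorem leftQuotient_postDollar_drop_mem {S : Set (Language (Option α))} {u : List α} {p : ℕ}
    (hp : p < u.length) (hnext : postDollar y (u.drop (p + 1)) ∈ S) (hzero : 0 ∈ S)
    (a : Option α) : (postDollar y (u.drop p)).leftQuotient [a] ∈ S := by
  rw [List.drop_eq_getElem_cons hp]
  by_cases ha : a = some u[p]
  · rwa [ha, leftQuotient_postDollar_cons_self]
  · rwa [leftQuotient_postDollar_cons_of_ne _ ha]

variable (x : List α)

abbrev ResidualIndex : Type := Option (Fin x.length ⊕ Fin y.length ⊕ Fin (y.length + 1))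

-- The shift `p + 1` makes the middle summand run over the proper suffixes of `y`, ending at `[]`.
def residual : ResidualIndex y x → Language (Option α)
  | none => 0
  | some (.inl k) => preDollar y (x.drop k)
  | some (.inr (.inl p)) => preDollar y (y.drop (p + 1))
  | some (.inr (.inr p)) => postDollar y (y.drop p)

theorem card_residualIndex : Fintype.card (ResidualIndex y x) = x.length + 2 * y.length + 2 := by
  simp only [Fintype.card_option, Fintype.card_sum, Fintype.card_fin]
  ring

theorem zero_mem_range_residual : 0 ∈ Set.range (residual y x) := ⟨none, rfl⟩

theorem preDollar_drop_mem_range_residual_of_pos {p : ℕ} (hp₀ : 0 < p) (hp : p ≤ y.length) :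
    preDollar y (y.drop p) ∈ Set.range (residual y x) :=
  ⟨some (.inr (.inl ⟨p - 1, by omega⟩)), by simp only [residual, Nat.sub_add_cancel hp₀]⟩

theorem preDollar_drop_mem_range_residual (hy : y ≠ []) {k : ℕ} (hk : k ≤ x.length) :
    preDollar y (x.drop k) ∈ Set.range (residual y x) := by
  rcases hk.lt_or_eq with hk | rfl
  · exact ⟨some (.inl ⟨k, hk⟩), rfl⟩
  · rw [List.drop_length, ← List.drop_length (l := y)]
    exact preDollar_drop_mem_range_residual_of_pos y x (List.length_pos_iff.mpr hy) le_rfl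

theorem postDollar_drop_mem_range_residual {p : ℕ} (hp : p ≤ y.length) :
    postDollar y (y.drop p) ∈ Set.range (residual y x) :=
  ⟨some (.inr (.inr ⟨p, by omega⟩)), rfl⟩

theorem leftQuotient_residual_mem_range (hy : y ≠ []) (i : ResidualIndex y x) (a : Option α) :
    (residual y x i).leftQuotient [a] ∈ Set.range (residual y x) := by
  have hn := List.length_pos_iff.mpr hy
  rcases i with _ | k | p | p
  · exact zero_mem_range_residual y x
  · exact leftQuotient_preDollar_drop_mem y k.isLt
      (preDollar_drop_mem_range_residual y x hy k.isLt) (zero_mem_range_residual y x) a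
  · change (preDollar y (y.drop (p + 1))).leftQuotient [a] ∈ _
    by_cases hp : p + 1 < y.length
    · exact leftQuotient_preDollar_drop_mem y hp
        (preDollar_drop_mem_range_residual_of_pos y x (by omega) hp) (zero_mem_range_residual y x) a
    rw [List.drop_eq_nil_of_le (by omega)]
    cases a with
    | none =>
      rw [leftQuotient_preDollar_nil_none y hy]
      simpa using postDollar_drop_mem_range_residual y x (Nat.zero_le _)
    | some b =>
      rw [leftQuotient_preDollar_nil_some]
      simpa using leftQuotient_preDollar_drop_mem y hn
        (preDollar_drop_mem_range_residual_of_pos y x one_pos hn) (zero_mem_range_residual y x) _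
  · change (postDollar y (y.drop p)).leftQuotient [a] ∈ _
    by_cases hp : p < y.length
    · exact leftQuotient_postDollar_drop_mem y hp
        (postDollar_drop_mem_range_residual y x hp) (zero_mem_range_residual y x) a
    rw [List.drop_eq_nil_of_le (by omega), leftQuotient_postDollar_nil]
    simpa using leftQuotient_postDollar_drop_mem y hn
      (postDollar_drop_mem_range_residual y x hn) (zero_mem_range_residual y x) a

end DollarLanguage

theorem stmt_11_general {α : Type} (x y : List α) (hy : y ≠ []) :
    ∃ (σ : Type) (inst : Fintype σ) (D : DFA (Option α) σ),
      @Fintype.card σ inst ≤ x.length + 2 * y.length + 2 ∧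
      D.accepts = { w : List (Option α) | ∃ i j : ℕ, 1 ≤ j ∧
        w = (x ++ rep y i).map some ++ none :: (rep y j).map some } := by
  have hstart : DollarLanguage.preDollar y x ∈ Set.range (DollarLanguage.residual y x) := by
    simpa using DollarLanguage.preDollar_drop_mem_range_residual y x hy (Nat.zero_le _)
  obtain ⟨σ, inst, D, hcard, hD⟩ := Language.exists_dfa_card_le_of_leftQuotient_mem _ hstart
    (DollarLanguage.leftQuotient_residual_mem_range y x hy)
  exact ⟨σ, inst, D, hcard.trans_eq (DollarLanguage.card_residualIndex y x), hD⟩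

/-- For `x ∈ Σ*` and `y ∈ Σ⁺` with `|x| = m`, `|y| = n`, there is a DFA with at
most `m + 2n + 2` states over `Σ ∪ {$}` (with `$` encoded as `none`)
recognizing `x y* $ y⁺`. -/
theorem stmt_11 {α : Type} [Fintype α] (x y : List α) (hy : y ≠ []) :
    ∃ (σ : Type) (inst : Fintype σ) (D : DFA (Option α) σ),
      @Fintype.card σ inst ≤ x.length + 2 * y.length + 2 ∧
      D.accepts = { w : List (Option α) | ∃ i j : ℕ, 1 ≤ j ∧
        w = (x ++ rep y i).map some ++ none :: (rep y j).map some } :=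
  stmt_11_general x y hy
end

section
/- Let F = (M, {A^u}) be an FDFA and B̄ its over-approximation Büchi automaton. For every ultimately periodic word w ∈ UP(L(B̄)), there exists a decomposition (u, v) of w and n ≥ 1 with v = v₁ v₂ ⋯ v_n such that for all i ∈ [1..n], v_i ∈ L(A^{M(u)}) and M(u v_i) = M(u). -/
/-- A family of DFAs: a leading DFA `M` (accepting states irrelevant) and a
progress DFA `A s` for each leading state `s`. -/
structure FDFA (α : Type) : Type 1 where
  S : Type
  finS : Fintype S
  M : DFA α S
  Pσ : S → Type
  finP : ∀ s, Fintype (Pσ s)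
  A : ∀ s, DFA α (Pσ s)

/-- The decomposition `(u, v)` is accepted by the FDFA `F`:
`M(uv) = M(u)` and `v ∈ L(A^{M(u)})`. -/
def FDFA.acceptsDecomp {α : Type} (F : FDFA α) (u v : List α) : Prop :=
  F.M.eval (u ++ v) = F.M.eval u ∧ v ∈ (F.A (F.M.eval u)).accepts

/-- `UP(F)`: ultimately periodic words with an accepted decomposition. -/
def FDFA.UPF {α : Type} [Inhabited α] (F : FDFA α) : Set (ℕ → α) :=
  { w | ∃ u v : List α, v ≠ [] ∧ w = upw u v ∧ F.acceptsDecomp u v }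

/-- `L(M^u_u × (A^u)^{s_u}_q × (A^u)^q_q)`: loop words of the
under-approximation component for leading state `u` and progress state `q`. -/
def underLoop {α : Type} (F : FDFA α) (u : F.S) (q : F.Pσ u) : Set (List α) :=
  { y | F.M.evalFrom u y = u ∧ (F.A u).eval y = q ∧ (F.A u).evalFrom q y = q }

/-- `L(M^u_u × (A^u)^{s_u}_q)`: loop words of the over-approximation component
for leading state `u` and progress state `q`. -/
def overLoop {α : Type} (F : FDFA α) (u : F.S) (q : F.Pσ u) : Set (List α) :=
  { y | F.M.evalFrom u y = u ∧ (F.A u).eval y = q }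

/-- The finite word `p` is a prefix of the infinite word `w`. -/
def prefW {α : Type} [Inhabited α] (p : List α) (w : ℕ → α) : Prop :=
  ∀ i, i < p.length → w i = p.getD i default

/-- `w` is the infinite concatenation `x · ys 0 · ys 1 · ⋯`. -/
def isConcatW {α : Type} [Inhabited α] (x : List α) (ys : ℕ → List α)
    (w : ℕ → α) : Prop :=
  ∀ n : ℕ, prefW (x ++ ((List.range n).map ys).flatten) w

/-- The ω-language of the under-approximation Büchi automaton `B̲`:
`⋃_{u, q accepting} L(M^{q₀}_u) · (L(M^u_u × (A^u)^{s_u}_q × (A^u)^q_q))^ω`. -/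
def underLang {α : Type} [Inhabited α] (F : FDFA α) : Set (ℕ → α) :=
  { w | ∃ (u : F.S) (q : F.Pσ u), q ∈ (F.A u).accept ∧
      ∃ (x : List α) (ys : ℕ → List α), F.M.eval x = u ∧
        (∀ i, ys i ≠ [] ∧ ys i ∈ underLoop F u q) ∧ isConcatW x ys w }

/-- The ω-language of the over-approximation Büchi automaton `B̄`:
`⋃_{u, q accepting} L(M^{q₀}_u) · (L(M^u_u × (A^u)^{s_u}_q))^ω`. -/
def overLang {α : Type} [Inhabited α] (F : FDFA α) : Set (ℕ → α) :=
  { w | ∃ (u : F.S) (q : F.Pσ u), q ∈ (F.A u).accept ∧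
      ∃ (x : List α) (ys : ℕ → List α), F.M.eval x = u ∧
        (∀ i, ys i ≠ [] ∧ ys i ∈ overLoop F u q) ∧ isConcatW x ys w }

/-- `UP(L(B̲))`. -/
def underUP {α : Type} [Inhabited α] (F : FDFA α) : Set (ℕ → α) :=
  UP (underLang F)

/-- `UP(L(B̄))`. -/
def overUP {α : Type} [Inhabited α] (F : FDFA α) : Set (ℕ → α) :=
  UP (overLang F)

section Aux

set_option linter.unusedSectionVars false
variable {α : Type} [Inhabited α]

lemma upw_lt (u v : List α) (i : ℕ) (h : i < u.length) :
    upw u v i = u.getD i default := by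
  simp [upw, prependW, h, List.getD_eq_getElem?_getD, List.getElem?_eq_getElem h]

lemma upw_ge (u v : List α) (i : ℕ) (h : u.length ≤ i) :
    upw u v i = v.getD ((i - u.length) % v.length) default := by
  simp [upw, prependW, periodW, Nat.not_lt.mpr h]

lemma upw_period (u v : List α) (i : ℕ) (h : u.length ≤ i) :
    upw u v (i + v.length) = upw u v i := by
  rw [upw_ge u v _ (le_trans h (Nat.le_add_right _ _)), upw_ge u v i h]
  congr 1
  have h2 : i + v.length - u.length = (i - u.length) + v.length := by omega
  rw [h2, Nat.add_mod_right]

lemma eq_upw (w : ℕ → α) (u v : List α)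
    (h1 : ∀ i < u.length, w i = u.getD i default)
    (h2 : ∀ j, w (u.length + j) = v.getD (j % v.length) default) :
    w = upw u v := by
  funext i
  rcases lt_or_ge i u.length with h | h
  · rw [upw_lt u v i h]; exact h1 i h
  · rw [upw_ge u v i h]
    have := h2 (i - u.length)
    rwa [Nat.add_sub_cancel' h] at this

lemma flatten_range_succ (ys : ℕ → List α) (k : ℕ) :
    ((List.range (k + 1)).map ys).flatten = ((List.range k).map ys).flatten ++ ys k := by
  rw [List.range_succ, List.map_append, List.flatten_append]
  simp

lemma flatten_range_add (ys : ℕ → List α) (m t : ℕ) :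
    ((List.range (m + t)).map ys).flatten =
      ((List.range m).map ys).flatten ++
        (((List.range t).map fun i => ys (m + i))).flatten := by
  rw [List.range_add, List.map_append, List.flatten_append, List.map_map]
  rfl

end Aux

/-- Every `w ∈ UP(L(B̄))` has a decomposition `(u, v₁⋯v_n)` (`n ≥ 1`) with each
`v_i ∈ L(A^{M(u)})` and `M(u v_i) = M(u)`. -/
theorem stmt_14 {α : Type} [Inhabited α] (F : FDFA α) (w : ℕ → α)
    (hw : w ∈ overUP F) :
    ∃ (u : List α) (vs : List (List α)), vs ≠ [] ∧ vs.flatten ≠ [] ∧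
      (∀ vi ∈ vs, vi ∈ (F.A (F.M.eval u)).accepts ∧
        F.M.eval (u ++ vi) = F.M.eval u) ∧
      w = upw u vs.flatten := by
  obtain ⟨u₀, v₀, hv₀, hw1, s, q, hq, x, ys, hx, hys, hcat⟩ := hw
  -- notation for prefixes
  set P : ℕ → List α := fun k => x ++ ((List.range k).map ys).flatten with hP
  have hPsucc : ∀ k, P (k + 1) = P k ++ ys k := by
    intro k; simp only [hP, flatten_range_succ, List.append_assoc]
  -- M stays at s after each P k
  have hMP : ∀ k, F.M.eval (P k) = s := by
    intro k
    induction k with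
    | zero => simpa [hP] using hx
    | succ k ih =>
      rw [hPsucc k]
      have := (hys k).2.1
      rw [DFA.eval, DFA.evalFrom_of_append, ← DFA.eval, ih, this]
  -- lengths grow
  have hlen : ∀ k, (P k).length < (P (k + 1)).length := by
    intro k
    have h2 : (P (k + 1)).length = (P k).length + (ys k).length := by
      rw [hPsucc k, List.length_append]
    have h3 : (ys k).length ≠ 0 := fun h => (hys k).1 (List.length_eq_zero_iff.mp h)
    omega
  have hgek : ∀ k, k ≤ (P k).length := by
    intro k
    induction k with
    | zero => exact Nat.zero_le _
    | succ k ih => have := hlen k; omega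
  have hmono : ∀ m n : ℕ, m < n → (P m).length < (P n).length := by
    intro m n hmn
    induction n with
    | zero => omega
    | succ n ih =>
      rcases Nat.lt_or_ge m n with h | h
      · exact lt_trans (ih h) (hlen n)
      · have : m = n := by omega
        subst this; exact hlen m
  -- periodicity of w
  have hv₀pos : 0 < v₀.length := List.length_pos_iff.mpr hv₀
  have hstep : ∀ i, u₀.length ≤ i → w (i + v₀.length) = w i := by
    intro i hi; rw [hw1]; exact upw_period u₀ v₀ i hi
  have hper : ∀ i, u₀.length ≤ i → ∀ t, w (i + t * v₀.length) = w i := by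
    intro i hi t
    induction t with
    | zero => simp
    | succ t ih =>
      have h1 : i + (t + 1) * v₀.length = (i + t * v₀.length) + v₀.length := by ring
      rw [h1, hstep _ (le_trans hi (Nat.le_add_right _ _)), ih]
  -- the main construction, for any m < n with matching residues
  have key : ∀ m n : ℕ, u₀.length ≤ m → m < n →
      ((P m).length % v₀.length = (P n).length % v₀.length) →
      ∃ (u : List α) (vs : List (List α)), vs ≠ [] ∧ vs.flatten ≠ [] ∧
        (∀ vi ∈ vs, vi ∈ (F.A (F.M.eval u)).accepts ∧
          F.M.eval (u ++ vi) = F.M.eval u) ∧ w = upw u vs.flatten := by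
    intro m n hum hmn hres
    set vs : List (List α) := (List.range (n - m)).map (fun i => ys (m + i)) with hvs
    have hsplit : P n = P m ++ vs.flatten := by
      have hn' : n = m + (n - m) := by omega
      rw [hn', hP]
      simp only [flatten_range_add ys m (n - m), List.append_assoc, hvs]
    set L := vs.flatten.length with hL
    have hPn : (P n).length = (P m).length + L := by rw [hsplit, List.length_append]
    have hmonoL : (P m).length < (P n).length := hmono m n hmn
    have hLpos : 0 < L := by omega
    have hNle : u₀.length ≤ (P m).length := le_trans hum (hgek m)
    -- divisibility
    have hdvd : v₀.length ∣ L := by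
      have h1 : (P m).length ≡ (P n).length [MOD v₀.length] := hres
      have h2 := (Nat.modEq_iff_dvd' (le_of_lt hmonoL)).mp h1
      have h3 : (P n).length - (P m).length = L := by omega
      rwa [h3] at h2
    refine ⟨P m, vs, ?_, ?_, ?_, ?_⟩
    · simp only [hvs, ne_eq, List.map_eq_nil_iff, List.range_eq_nil]; omega
    · intro h; rw [h] at hL; simp at hL; omega
    · intro vi hvi
      rw [hvs, List.mem_map] at hvi
      obtain ⟨i, _, rfl⟩ := hvi
      obtain ⟨hloop1, hloop2⟩ := (hys (m + i)).2
      refine ⟨?_, ?_⟩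
      · rw [hMP m, DFA.mem_accepts, hloop2]; exact hq
      · rw [hMP m, DFA.eval, DFA.evalFrom_of_append, ← DFA.eval, hMP m, hloop1]
    · -- w = upw (P m) vs.flatten
      apply eq_upw
      · intro i hi
        exact hcat m i hi
      · intro j
        have hbase : ∀ j' < L, w ((P m).length + j') = vs.flatten.getD j' default := by
          intro j' hj'
          have hlt : (P m).length + j' < (P n).length := by omega
          have h4 := hcat n ((P m).length + j') hlt
          rw [h4, show (x ++ ((List.range n).map ys).flatten) = P m ++ vs.flatten from hsplit,
            List.getD_append_right _ _ _ _ (Nat.le_add_right _ _), Nat.add_sub_cancel_left]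
        have hmod : j % L < L := Nat.mod_lt _ hLpos
        have hjdecomp : (P m).length + j = ((P m).length + j % L) + (j / L) * L := by
          have h5 := Nat.mod_add_div j L
          have h6 : L * (j / L) = j / L * L := Nat.mul_comm _ _
          omega
        obtain ⟨c, hc⟩ := hdvd
        have h7 : j / L * L = (j / L * c) * v₀.length := by rw [hc]; ring
        have hperiodic : w ((P m).length + j) = w ((P m).length + j % L) := by
          rw [hjdecomp, h7]
          exact hper _ (le_trans hNle (Nat.le_add_right _ _)) _
        rw [hperiodic, hbase _ hmod, hL]
  -- pigeonhole on residues
  set N := u₀.length with hN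
  obtain ⟨a, b, hab, hfab⟩ := Fintype.exists_ne_map_eq_of_card_lt
    (fun k : Fin (v₀.length + 1) =>
      (⟨(P (N + k)).length % v₀.length, Nat.mod_lt _ hv₀pos⟩ : Fin v₀.length))
    (by simp)
  have hfab' : (P (N + (a : ℕ))).length % v₀.length
      = (P (N + (b : ℕ))).length % v₀.length := congrArg Fin.val hfab
  rcases Nat.lt_or_ge (a : ℕ) (b : ℕ) with h | h
  · exact key (N + a) (N + b) (Nat.le_add_right _ _) (by omega) hfab'
  · rcases Nat.lt_or_ge (b : ℕ) (a : ℕ) with h' | h'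
    · exact key (N + b) (N + a) (Nat.le_add_right _ _) (by omega) hfab'.symm
    · exact absurd (Fin.ext (le_antisymm h' h)) hab
end
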